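/- arXiv:quant-ph/0510098 — 6 statements merged into one kernel-verified Lean document; each statement's English description precedes it below -/
import Mathlib

section
/- Let ρ, A : ℝ×ℝ → ℂ be smooth, 2π-periodic in each variable, with A(φ,φ) = 1 for all φ. Define the first moment after n steps M₁(n) = (1/(2πi)) ∫₀^{2π} [∂_φ (ρ(φ,φ')A(φ,φ')ⁿ)]_{φ'=φ} dφ (the partial derivative acting on the first argument only). Then for every natural number n, M₁(n) = K₁·n + M₁(0), where K₁ = (1/(2πi)) ∫₀^{2π} ρ(φ,φ) ∂₁A(φ,φ) dφ and ∂₁A denotes the partial derivative of A in its first argument evaluated on the diagonal. -/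
open MeasureTheory Real intervalIntegral

private lemma hasDerivAt_first (F : ℝ × ℝ → ℂ) (hF : ContDiff ℝ (⊤ : ℕ∞) F) (x y : ℝ) :
    HasDerivAt (fun t => F (t, y)) (fderiv ℝ F (x, y) (1, 0)) x := by
  have h1 : HasFDerivAt F (fderiv ℝ F (x, y)) (x, y) :=
    (hF.differentiable (by simp) (x, y)).hasFDerivAt
  have h2 : HasDerivAt (fun t : ℝ => (t, y)) ((1 : ℝ), (0 : ℝ)) x :=
    HasDerivAt.prodMk (hasDerivAt_id x) (hasDerivAt_const x y)
  exact h1.comp_hasDerivAt x h2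

private lemma cont_first (F : ℝ × ℝ → ℂ) (hF : ContDiff ℝ (⊤ : ℕ∞) F) :
    Continuous fun φ : ℝ => fderiv ℝ F (φ, φ) ((1 : ℝ), (0 : ℝ)) := by
  have h := (hF.continuous_fderiv (by simp)).comp (continuous_id.prodMk continuous_id)
  exact h.clm_apply continuous_const

/-- Lemma 1 (mean part): for the ε_{V^k} quantum random walk with characteristic
function `A` and initial walker kernel `ρ`, the first moment after `n` steps is
affine in `n`: `M₁(n) = K₁·n + M₁(0)`. -/
theorem mean_position_affine
    (ρ A : ℝ × ℝ → ℂ)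
    (hρ : ContDiff ℝ (⊤ : ℕ∞) ρ) (hA : ContDiff ℝ (⊤ : ℕ∞) A)
    (hρper₁ : ∀ x y, ρ (x + 2 * π, y) = ρ (x, y))
    (hρper₂ : ∀ x y, ρ (x, y + 2 * π) = ρ (x, y))
    (hAper₁ : ∀ x y, A (x + 2 * π, y) = A (x, y))
    (hAper₂ : ∀ x y, A (x, y + 2 * π) = A (x, y))
    (hAdiag : ∀ φ, A (φ, φ) = 1)
    (M₁ : ℕ → ℂ)
    (hM₁ : ∀ n, M₁ n = (1 / (2 * π * Complex.I)) *
      ∫ φ in (0:ℝ)..(2 * π), deriv (fun x => ρ (x, φ) * A (x, φ) ^ n) φ)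
    (K₁ : ℂ)
    (hK₁ : K₁ = (1 / (2 * π * Complex.I)) *
      ∫ φ in (0:ℝ)..(2 * π), ρ (φ, φ) * deriv (fun x => A (x, φ)) φ) :
    ∀ n : ℕ, M₁ n = K₁ * n + M₁ 0 := by
  set c : ℂ := 1 / (2 * π * Complex.I) with hc
  set f : ℝ → ℂ := fun φ => fderiv ℝ ρ (φ, φ) ((1 : ℝ), (0 : ℝ)) with hf
  set g : ℝ → ℂ := fun φ => ρ (φ, φ) * fderiv ℝ A (φ, φ) ((1 : ℝ), (0 : ℝ)) with hg
  have hcf : Continuous f := cont_first ρ hρ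
  have hcg : Continuous g :=
    ((hρ.continuous).comp (continuous_id.prodMk continuous_id)).mul (cont_first A hA)
  have hIf : IntervalIntegrable f volume 0 (2 * π) := hcf.intervalIntegrable _ _
  have hIg : IntervalIntegrable g volume 0 (2 * π) := hcg.intervalIntegrable _ _
  -- key pointwise identity
  have key : ∀ (m : ℕ) (φ : ℝ),
      deriv (fun x => ρ (x, φ) * A (x, φ) ^ m) φ = f φ + (m : ℂ) * g φ := by
    intro m φ
    have hr := hasDerivAt_first ρ hρ φ φ
    have ha := hasDerivAt_first A hA φ φ
    set a : ℂ := fderiv ℝ A (φ, φ) ((1 : ℝ), (0 : ℝ)) with hadef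
    have hpow : ∀ k : ℕ, HasDerivAt (fun x => A (x, φ) ^ k) ((k : ℂ) * a) φ := by
      intro k
      induction k with
      | zero => simpa using hasDerivAt_const φ (1 : ℂ)
      | succ j ih =>
        have h2 : HasDerivAt (fun x => A (x, φ) ^ (j + 1))
            ((j : ℂ) * a * A (φ, φ) + A (φ, φ) ^ j * a) φ := by
          simpa [pow_succ] using ih.fun_mul ha
        convert h2 using 1
        rw [hAdiag φ]
        push_cast
        ring
    have h := hr.fun_mul (hpow m)
    rw [h.deriv]
    simp only [hf, hg, hAdiag φ, one_pow, mul_one]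
    ring
  -- M₁ 0
  have hM0 : M₁ 0 = c * ∫ φ in (0:ℝ)..(2 * π), f φ := by
    rw [hM₁ 0]
    congr 1
    apply intervalIntegral.integral_congr
    intro φ _
    simpa using key 0 φ
  -- K₁
  have hK : K₁ = c * ∫ φ in (0:ℝ)..(2 * π), g φ := by
    rw [hK₁]
    congr 1
    apply intervalIntegral.integral_congr
    intro φ _
    simp only [hg, (hasDerivAt_first A hA φ φ).deriv]
  intro n
  rw [hM₁ n]
  have : (∫ φ in (0:ℝ)..(2 * π), deriv (fun x => ρ (x, φ) * A (x, φ) ^ n) φ)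
      = (∫ φ in (0:ℝ)..(2 * π), f φ) + (n : ℂ) * ∫ φ in (0:ℝ)..(2 * π), g φ := by
    rw [show (fun φ => deriv (fun x => ρ (x, φ) * A (x, φ) ^ n) φ)
        = fun φ => f φ + (n : ℂ) * g φ from funext fun φ => key n φ]
    rw [intervalIntegral.integral_add hIf (hIg.const_mul _),
      intervalIntegral.integral_const_mul]
  rw [this, hM0, hK]
  ring
end

section
/- Let ρ, A : ℝ×ℝ → ℂ be smooth, 2π-periodic in each variable, with A(φ,φ) = 1 for all φ. Define M₁(n) = (1/(2πi)) ∫₀^{2π} [∂_φ (ρ(φ,φ')A(φ,φ')ⁿ)]_{φ'=φ} dφ and M₂(n) = (1/(2πi²)) ∫₀^{2π} [∂_φ² (ρ(φ,φ')A(φ,φ')ⁿ)]_{φ'=φ} dφ (partial derivatives acting on the first argument only). Then there exist constants K₂, K₃ ∈ ℂ, independent of n, such that for every natural number n the variance satisfies M₂(n) − M₁(n)² = K₂·n² + K₃·n + (M₂(0) − M₁(0)²). -/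
open MeasureTheory Real intervalIntegral
open scoped ContDiff

/-- Partial derivative in the first variable. -/
noncomputable def pd (F : ℝ × ℝ → ℂ) : ℝ × ℝ → ℂ :=
  fun p => fderiv ℝ F p (1, 0)

lemma pd_contDiff {F : ℝ × ℝ → ℂ} (hF : ContDiff ℝ ∞ F) : ContDiff ℝ ∞ (pd F) :=
  (contDiff_infty_iff_fderiv.mp hF).2.clm_apply contDiff_const

lemma slice_hasDerivAt {F : ℝ × ℝ → ℂ} (hF : ContDiff ℝ ∞ F) (x y : ℝ) :
    HasDerivAt (fun t => F (t, y)) (pd F (x, y)) x := by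
  have h := (hF.differentiable (by simp) (x, y)).hasFDerivAt
  have h2 : HasDerivAt (fun t : ℝ => (t, y)) ((1 : ℝ), (0 : ℝ)) x :=
    (hasDerivAt_id x).prodMk (hasDerivAt_const x y)
  exact h.comp_hasDerivAt x h2

lemma diag_continuous {F : ℝ × ℝ → ℂ} (hF : ContDiff ℝ ∞ F) :
    Continuous (fun φ : ℝ => F (φ, φ)) :=
  hF.continuous.comp (continuous_id.prodMk continuous_id)

lemma hasDerivAt_pow_comp {f : ℝ → ℂ} {f' : ℂ} {x : ℝ} (n : ℕ) (hf : HasDerivAt f f' x) :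
    HasDerivAt (fun t => f t ^ n) ((n : ℂ) * f x ^ (n - 1) * f') x := by
  induction n with
  | zero => simpa using hasDerivAt_const x (1 : ℂ)
  | succ m ih =>
    have h := ih.fun_mul hf
    have he : (fun t => f t ^ m * f t) = fun t => f t ^ (m + 1) := by
      funext t; rw [← pow_succ]
    rw [he] at h
    refine h.congr_deriv ?_
    cases m with
    | zero => simp
    | succ k => push_cast [Nat.succ_sub_one]; ring

lemma nat_cast_mul_pred (n : ℕ) : (n : ℂ) * ((n - 1 : ℕ) : ℂ) = (n : ℂ) ^ 2 - n := by
  cases n with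
  | zero => simp
  | succ m => push_cast [Nat.succ_sub_one]; ring

/-- Lemma 1 (variance part): for the ε_{V^k} quantum random walk with
characteristic function `A` and initial walker kernel `ρ`, the variance after
`n` steps is quadratic in `n`: `σ²(n) = K₂·n² + K₃·n + σ²(0)`. -/
theorem variance_quadratic
    (ρ A : ℝ × ℝ → ℂ)
    (hρ : ContDiff ℝ (⊤ : ℕ∞) ρ) (hA : ContDiff ℝ (⊤ : ℕ∞) A)
    (hρper₁ : ∀ x y, ρ (x + 2 * π, y) = ρ (x, y))
    (hρper₂ : ∀ x y, ρ (x, y + 2 * π) = ρ (x, y))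
    (hAper₁ : ∀ x y, A (x + 2 * π, y) = A (x, y))
    (hAper₂ : ∀ x y, A (x, y + 2 * π) = A (x, y))
    (hAdiag : ∀ φ, A (φ, φ) = 1)
    (M₁ M₂ : ℕ → ℂ)
    (hM₁ : ∀ n, M₁ n = (1 / (2 * π * Complex.I)) *
      ∫ φ in (0:ℝ)..(2 * π), deriv (fun x => ρ (x, φ) * A (x, φ) ^ n) φ)
    (hM₂ : ∀ n, M₂ n = (1 / (2 * π * Complex.I ^ 2)) *
      ∫ φ in (0:ℝ)..(2 * π), iteratedDeriv 2 (fun x => ρ (x, φ) * A (x, φ) ^ n) φ) :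
    ∃ K₂ K₃ : ℂ, ∀ n : ℕ,
      M₂ n - (M₁ n) ^ 2 = K₂ * n ^ 2 + K₃ * n + (M₂ 0 - (M₁ 0) ^ 2) := by
  have hρ : ContDiff ℝ ∞ ρ := hρ.of_le (by simp)
  have hA : ContDiff ℝ ∞ A := hA.of_le (by simp)
  -- basic pointwise functions
  set P : ℝ → ℂ := fun φ => pd ρ (φ, φ) with hP
  set Q : ℝ → ℂ := fun φ => ρ (φ, φ) * pd A (φ, φ) with hQ
  set R : ℝ → ℂ := fun φ => pd (pd ρ) (φ, φ) with hR
  set S : ℝ → ℂ :=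
    fun φ => 2 * pd ρ (φ, φ) * pd A (φ, φ) + ρ (φ, φ) * pd (pd A) (φ, φ) with hS
  set T : ℝ → ℂ := fun φ => ρ (φ, φ) * pd A (φ, φ) ^ 2 with hT
  -- continuity / integrability
  have hPc : Continuous P := diag_continuous (pd_contDiff hρ)
  have hQc : Continuous Q :=
    (diag_continuous hρ).mul (diag_continuous (pd_contDiff hA))
  have hRc : Continuous R := diag_continuous (pd_contDiff (pd_contDiff hρ))
  have hSc : Continuous S := by
    have h1 := diag_continuous (pd_contDiff hρ)
    have h2 := diag_continuous (pd_contDiff hA)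
    have h3 := diag_continuous hρ
    have h4 := diag_continuous (pd_contDiff (pd_contDiff hA))
    exact ((continuous_const.mul h1).mul h2).add (h3.mul h4)
  have hTc : Continuous T :=
    (diag_continuous hρ).mul ((diag_continuous (pd_contDiff hA)).pow 2)
  have hPint : IntervalIntegrable P volume 0 (2 * π) := hPc.intervalIntegrable _ _
  have hQint : IntervalIntegrable Q volume 0 (2 * π) := hQc.intervalIntegrable _ _
  have hRint : IntervalIntegrable R volume 0 (2 * π) := hRc.intervalIntegrable _ _
  have hSint : IntervalIntegrable S volume 0 (2 * π) := hSc.intervalIntegrable _ _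
  have hTint : IntervalIntegrable T volume 0 (2 * π) := hTc.intervalIntegrable _ _
  -- first derivative pointwise
  have hd1 : ∀ (n : ℕ) (φ x : ℝ),
      deriv (fun x => ρ (x, φ) * A (x, φ) ^ n) x
        = pd ρ (x, φ) * A (x, φ) ^ n
          + ρ (x, φ) * ((n : ℂ) * A (x, φ) ^ (n - 1) * pd A (x, φ)) :=
    fun n φ x => ((slice_hasDerivAt hρ x φ).mul (hasDerivAt_pow_comp n (slice_hasDerivAt hA x φ))).deriv
  have key1 : ∀ (n : ℕ) (φ : ℝ),
      deriv (fun x => ρ (x, φ) * A (x, φ) ^ n) φ = P φ + (n : ℂ) * Q φ := by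
    intro n φ
    rw [hd1 n φ φ, hAdiag φ]
    simp only [one_pow, hP, hQ]
    ring
  -- second derivative pointwise
  have key2 : ∀ (n : ℕ) (φ : ℝ),
      iteratedDeriv 2 (fun x => ρ (x, φ) * A (x, φ) ^ n) φ
        = R φ + (n : ℂ) * S φ + ((n : ℂ) ^ 2 - n) * T φ := by
    intro n φ
    rw [show (2 : ℕ) = 1 + 1 from rfl, iteratedDeriv_succ, iteratedDeriv_one]
    have hfun : deriv (fun x => ρ (x, φ) * A (x, φ) ^ n)
        = fun x => pd ρ (x, φ) * A (x, φ) ^ n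
            + ρ (x, φ) * ((n : ℂ) * A (x, φ) ^ (n - 1) * pd A (x, φ)) :=
      funext (hd1 n φ)
    rw [hfun]
    have t1 := (slice_hasDerivAt (pd_contDiff hρ) φ φ).fun_mul (hasDerivAt_pow_comp n (slice_hasDerivAt hA φ φ))
    have t2 := (slice_hasDerivAt hρ φ φ).fun_mul
      (((hasDerivAt_pow_comp (n - 1) (slice_hasDerivAt hA φ φ)).const_mul ((n : ℂ))).fun_mul
        (slice_hasDerivAt (pd_contDiff hA) φ φ))
    rw [(t1.fun_add t2).deriv]
    have hc := nat_cast_mul_pred n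
    simp only [hAdiag φ, one_pow, hP, hQ, hR, hS, hT]
    linear_combination (ρ (φ, φ) * pd A (φ, φ) ^ 2) * hc
  -- the moments as polynomials in n
  set c₀ : ℂ := 1 / (2 * π * Complex.I) with hc₀
  set c₁ : ℂ := 1 / (2 * π * Complex.I ^ 2) with hc₁
  set IP := ∫ φ in (0:ℝ)..(2 * π), P φ with hIP
  set IQ := ∫ φ in (0:ℝ)..(2 * π), Q φ with hIQ
  set IR := ∫ φ in (0:ℝ)..(2 * π), R φ with hIR
  set IS := ∫ φ in (0:ℝ)..(2 * π), S φ with hIS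
  set IT := ∫ φ in (0:ℝ)..(2 * π), T φ with hIT
  have hM₁' : ∀ n : ℕ, M₁ n = c₀ * IP + c₀ * IQ * n := by
    intro n
    rw [hM₁ n]
    rw [intervalIntegral.integral_congr (g := fun φ => P φ + (n : ℂ) * Q φ)
      (fun φ _ => key1 n φ)]
    rw [intervalIntegral.integral_add hPint (hQint.const_mul _),
      intervalIntegral.integral_const_mul]
    ring
  have hM₂' : ∀ n : ℕ, M₂ n = c₁ * IR + c₁ * IS * n + c₁ * IT * ((n : ℂ) ^ 2 - n) := by
    intro n
    rw [hM₂ n]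
    rw [intervalIntegral.integral_congr
      (g := fun φ => R φ + (n : ℂ) * S φ + ((n : ℂ) ^ 2 - n) * T φ)
      (fun φ _ => key2 n φ)]
    rw [intervalIntegral.integral_add (hRint.add (hSint.const_mul _)) (hTint.const_mul _),
      intervalIntegral.integral_add hRint (hSint.const_mul _),
      intervalIntegral.integral_const_mul, intervalIntegral.integral_const_mul]
    ring
  refine ⟨c₁ * IT - (c₀ * IQ) ^ 2, c₁ * IS - c₁ * IT - 2 * (c₀ * IP) * (c₀ * IQ), fun n => ?_⟩
  rw [hM₂' n, hM₁' n, hM₂' 0, hM₁' 0]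
  push_cast
  ring
end

section
/- Let ρ, A : ℝ×ℝ → ℂ be smooth, 2π-periodic in each variable, with A(φ,φ) = 1 for all φ, and define the asymptotic characteristic function h(φ) = −i ∂₁A(φ,φ) (partial derivative of A in the first argument, evaluated on the diagonal); assume h is real-valued. For each integer s ≥ 1 define M_s(n) = (1/(2π iˢ)) ∫₀^{2π} [∂_φˢ (ρ(φ,φ')A(φ,φ')ⁿ)]_{φ'=φ} dφ. Then for each s ≥ 1 there exists a constant C ≥ 0 such that for all n ≥ 1, |M_s(n) − nˢ·(1/(2π)) ∫₀^{2π} ρ(φ,φ) h(φ)ˢ dφ| ≤ C·n^{s−1}. In particular M_s(n)/nˢ converges to (1/(2π)) ∫₀^{2π} ρ(φ,φ) h(φ)ˢ dφ as n → ∞. -/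
open MeasureTheory Real intervalIntegral Filter
open scoped ContDiff

section Aux

lemma aux_deriv_mul_pow (F g : ℝ → ℂ) (hF : ContDiff ℝ ∞ F) (hg : ContDiff ℝ ∞ g) (k : ℕ) :
    deriv (fun x => F x * g x ^ (k + 1)) =
      fun x => (deriv F x * g x + (k + 1) * F x * deriv g x) * g x ^ k := by
  have hgd : Differentiable ℝ g := hg.differentiable (by simp)
  have hFd : Differentiable ℝ F := hF.differentiable (by simp)
  have hpow : ∀ m : ℕ, ∀ x : ℝ, deriv (fun x => g x ^ (m + 1)) x
      = (m + 1 : ℂ) * g x ^ m * deriv g x := by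
    intro m
    induction m with
    | zero => intro x; simp
    | succ m IH =>
      intro x
      have hrw : (fun x => g x ^ (m + 1 + 1)) = fun x => g x ^ (m + 1) * g x := by
        funext y; rw [pow_succ]
      rw [hrw, deriv_fun_mul (by fun_prop : DifferentiableAt ℝ (fun y => g y ^ (m + 1)) x) (hgd x), IH x]
      push_cast; ring
  funext x
  rw [deriv_fun_mul (hFd x) (by fun_prop : DifferentiableAt ℝ (fun y => g y ^ (k + 1)) x), hpow k x]
  push_cast
  ring

lemma aux_deriv_contDiff (F : ℝ → ℂ) (hF : ContDiff ℝ ∞ F) : ContDiff ℝ ∞ (deriv F) :=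
  (contDiff_infty_iff_deriv.mp hF).2

lemma aux_vanish (x₀ : ℝ) (g : ℝ → ℂ) (hg : ContDiff ℝ ∞ g) (hg0 : g x₀ = 0) :
    ∀ (k s : ℕ), s < k → ∀ (F : ℝ → ℂ), ContDiff ℝ ∞ F →
      iteratedDeriv s (fun x => F x * g x ^ k) x₀ = 0 := by
  intro k
  induction k with
  | zero => intro s hs; omega
  | succ k IH =>
    intro s hs F hF
    cases s with
    | zero => simp [hg0]
    | succ t =>
      rw [iteratedDeriv_succ', aux_deriv_mul_pow F g hF hg k]
      exact IH t (by omega) _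
        (((aux_deriv_contDiff F hF).mul hg).add
          ((contDiff_const.mul hF).mul (aux_deriv_contDiff g hg)))

lemma aux_leading (x₀ : ℝ) (g : ℝ → ℂ) (hg : ContDiff ℝ ∞ g) (hg0 : g x₀ = 0) :
    ∀ (s : ℕ) (F : ℝ → ℂ), ContDiff ℝ ∞ F →
      iteratedDeriv s (fun x => F x * g x ^ s) x₀
        = (s.factorial : ℂ) * F x₀ * (deriv g x₀) ^ s := by
  intro s
  induction s with
  | zero => intro F hF; simp
  | succ s IH =>
    intro F hF
    rw [iteratedDeriv_succ', aux_deriv_mul_pow F g hF hg s,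
      IH _ (((aux_deriv_contDiff F hF).mul hg).add
        ((contDiff_const.mul hF).mul (aux_deriv_contDiff g hg)))]
    rw [hg0]
    rw [Nat.factorial_succ]
    push_cast
    ring

end Aux

section Aux2

lemma aux_iteratedDeriv_sum {ι : Type*} (u : Finset ι) (f : ι → ℝ → ℂ) (s : ℕ) (x : ℝ)
    (h : ∀ j ∈ u, ContDiff ℝ ∞ (f j)) :
    iteratedDeriv s (fun y => ∑ j ∈ u, f j y) x = ∑ j ∈ u, iteratedDeriv s (f j) x := by
  have H := iteratedFDeriv_sum (𝕜 := ℝ) (f := f) (u := u) (i := s)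
    (fun j hj => (h j hj).of_le (by exact_mod_cast le_top))
  simp only [iteratedDeriv_eq_iteratedFDeriv]
  have := congrFun H x
  simp only [Finset.sum_apply] at this
  rw [show (fun y => ∑ j ∈ u, f j y) = (∑ j ∈ u, f j ·) from rfl, this]
  simp [ContinuousMultilinearMap.sum_apply]

lemma aux_iteratedDeriv_const_mul (s : ℕ) (x : ℝ) (c : ℂ) (f : ℝ → ℂ)
    (hf : ContDiff ℝ ∞ f) :
    iteratedDeriv s (fun y => c * f y) x = c * iteratedDeriv s f x := by
  simp only [← iteratedDerivWithin_univ]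
  have := iteratedDerivWithin_const_smul (𝕜 := ℝ) (F := ℂ) (R := ℂ) (n := s)
    (f := f) (Set.mem_univ x) uniqueDiffOn_univ c
    (hf.contDiffWithinAt.of_le (by exact_mod_cast le_top))
  simpa [smul_eq_mul] using this

lemma aux_slice_contDiff (g : ℝ × ℝ → ℂ) (hg : ContDiff ℝ ∞ g) (φ : ℝ) :
    ContDiff ℝ ∞ (fun x : ℝ => g (x, φ)) :=
  hg.comp (contDiff_id.prodMk contDiff_const)

lemma aux_slice_iteratedDeriv (g : ℝ × ℝ → ℂ) (hg : ContDiff ℝ ∞ g) (s : ℕ) (φ : ℝ) :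
    ∀ x : ℝ, iteratedDeriv s (fun t => g (t, φ)) x
      = iteratedFDeriv ℝ s g (x, φ) (fun _ => ((1:ℝ), (0:ℝ))) := by
  induction s with
  | zero => intro x; simp
  | succ s IH =>
    intro x
    rw [iteratedDeriv_succ]
    have hIH : iteratedDeriv s (fun t => g (t, φ))
        = fun t => (ContinuousMultilinearMap.apply ℝ (fun _ : Fin s => ℝ × ℝ) ℂ
            (fun _ => ((1:ℝ), (0:ℝ)))) (iteratedFDeriv ℝ s g (t, φ)) :=
      funext fun t => IH t
    have hG : ContDiff ℝ ∞ (iteratedFDeriv ℝ s g) :=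
      hg.iteratedFDeriv_right (by exact_mod_cast le_top)
    have h1 : HasDerivAt (fun t : ℝ => (t, φ)) ((1:ℝ), (0:ℝ)) x :=
      (hasDerivAt_id x).prodMk (hasDerivAt_const x φ)
    have h2 : HasDerivAt (fun t => iteratedFDeriv ℝ s g (t, φ))
        (fderiv ℝ (iteratedFDeriv ℝ s g) (x, φ) ((1:ℝ), (0:ℝ))) x :=
      (hG.differentiable (by simp) (x, φ)).hasFDerivAt.comp_hasDerivAt x h1
    have h3 := (ContinuousMultilinearMap.apply ℝ (fun _ : Fin s => ℝ × ℝ) ℂ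
      (fun _ => ((1:ℝ), (0:ℝ)))).hasFDerivAt.comp_hasDerivAt x h2
    have h3' : HasDerivAt (fun t => (ContinuousMultilinearMap.apply ℝ (fun _ : Fin s => ℝ × ℝ) ℂ
        (fun _ => ((1:ℝ), (0:ℝ)))) (iteratedFDeriv ℝ s g (t, φ)))
        ((ContinuousMultilinearMap.apply ℝ (fun _ : Fin s => ℝ × ℝ) ℂ (fun _ => ((1:ℝ), (0:ℝ))))
          ((fderiv ℝ (iteratedFDeriv ℝ s g) (x, φ)) ((1:ℝ), (0:ℝ)))) x := h3
    rw [hIH, h3'.deriv]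
    rw [iteratedFDeriv_succ_apply_left]
    simp only [ContinuousMultilinearMap.apply_apply]
    rfl

lemma aux_cont (g : ℝ × ℝ → ℂ) (hg : ContDiff ℝ ∞ g) (s : ℕ) :
    Continuous (fun φ => iteratedDeriv s (fun t => g (t, φ)) φ) := by
  have : (fun φ => iteratedDeriv s (fun t => g (t, φ)) φ)
      = fun φ => (iteratedFDeriv ℝ s g (φ, φ)) (fun _ => ((1:ℝ), (0:ℝ))) :=
    funext fun φ => aux_slice_iteratedDeriv g hg s φ φ
  rw [this]
  exact (ContinuousMultilinearMap.apply ℝ (fun _ : Fin s => ℝ × ℝ) ℂ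
      (fun _ => ((1:ℝ), (0:ℝ)))).continuous.comp
    ((hg.continuous_iteratedFDeriv (by exact_mod_cast le_top)).comp
      (continuous_id.prodMk continuous_id))

lemma aux_desc_bound : ∀ s : ℕ, ∃ C : ℝ, 0 ≤ C ∧ ∀ n : ℕ, 1 ≤ n →
    |((n.descFactorial s : ℝ)) - (n : ℝ) ^ s| * n ≤ C * (n : ℝ) ^ s := by
  intro s
  induction s with
  | zero => exact ⟨0, le_refl 0, fun n hn => by simp⟩
  | succ s IH =>
    obtain ⟨C, hC0, hC⟩ := IH
    refine ⟨C + s + (s + 1), by positivity, fun n hn => ?_⟩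
    have hn1 : (1 : ℝ) ≤ n := by exact_mod_cast hn
    have hn0 : (0 : ℝ) < n := by linarith
    rcases le_or_gt (s + 1) n with h | h
    · have hsn : s ≤ n := by omega
      have hcast : ((n.descFactorial (s + 1) : ℝ)) = ((n : ℝ) - s) * (n.descFactorial s : ℝ) := by
        rw [Nat.descFactorial_succ]
        push_cast [Nat.cast_sub hsn]
        ring
      have hsn' : (s : ℝ) ≤ n := by exact_mod_cast hsn
      have key : ((n.descFactorial (s + 1) : ℝ)) - (n : ℝ) ^ (s + 1)
          = ((n : ℝ) - s) * (((n.descFactorial s : ℝ)) - (n : ℝ) ^ s) - s * (n : ℝ) ^ s := by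
        rw [hcast]; ring
      have hd := hC n hn
      have habs : |((n.descFactorial (s + 1) : ℝ)) - (n : ℝ) ^ (s + 1)|
          ≤ (n : ℝ) * |((n.descFactorial s : ℝ)) - (n : ℝ) ^ s| + s * (n : ℝ) ^ s := by
        rw [key]
        refine (abs_sub _ _).trans ?_
        gcongr
        · rw [abs_mul]
          gcongr
          rw [abs_of_nonneg (by linarith)]
          linarith
        · rw [abs_mul, abs_of_nonneg (by positivity), abs_of_nonneg (by positivity)]
      calc |((n.descFactorial (s + 1) : ℝ)) - (n : ℝ) ^ (s + 1)| * n
          ≤ ((n : ℝ) * |((n.descFactorial s : ℝ)) - (n : ℝ) ^ s| + s * (n : ℝ) ^ s) * n := by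
            apply mul_le_mul_of_nonneg_right habs (le_of_lt hn0)
        _ = (|((n.descFactorial s : ℝ)) - (n : ℝ) ^ s| * n) * n + s * (n : ℝ) ^ (s + 1) := by ring
        _ ≤ (C * (n : ℝ) ^ s) * n + s * (n : ℝ) ^ (s + 1) := by
            apply add_le_add_left (mul_le_mul_of_nonneg_right hd (le_of_lt hn0))
        _ = (C + s) * (n : ℝ) ^ (s + 1) := by ring
        _ ≤ (C + s + (s + 1)) * (n : ℝ) ^ (s + 1) := by
            apply mul_le_mul_of_nonneg_right (by linarith) (by positivity)
    · have hz : n.descFactorial (s + 1) = 0 := Nat.descFactorial_eq_zero_iff_lt.mpr (by omega)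
      rw [hz]
      have hns : (n : ℝ) ≤ s + 1 := by exact_mod_cast Nat.le_of_lt_succ (by omega)
      calc |(((0 : ℕ)) : ℝ) - (n : ℝ) ^ (s + 1)| * n = (n : ℝ) ^ (s + 1) * n := by
            rw [Nat.cast_zero, zero_sub, abs_neg, abs_of_nonneg (by positivity)]
        _ = (n : ℝ) * (n : ℝ) ^ (s + 1) := by ring
        _ ≤ (s + 1) * (n : ℝ) ^ (s + 1) := by
            apply mul_le_mul_of_nonneg_right hns (by positivity)
        _ ≤ (C + s + (s + 1)) * (n : ℝ) ^ (s + 1) := by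
            apply mul_le_mul_of_nonneg_right (by linarith) (by positivity)

end Aux2

/-- Asymptotics of the moments (eq. (3)): the `s`-th moment after `n` steps equals
`nˢ · (1/2π) ∫ ρ(φ,φ) h(φ)ˢ dφ + O(n^{s-1})`, where `h(φ) = -i ∂₁A(φ,φ)` is the
asymptotic characteristic function; in particular `M_s(n)/nˢ` converges to that
integral. -/
theorem moments_asymptotic
    (ρ A : ℝ × ℝ → ℂ)
    (hρ : ContDiff ℝ (⊤ : ℕ∞) ρ) (hA : ContDiff ℝ (⊤ : ℕ∞) A)
    (hρper₁ : ∀ x y, ρ (x + 2 * π, y) = ρ (x, y))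
    (hρper₂ : ∀ x y, ρ (x, y + 2 * π) = ρ (x, y))
    (hAper₁ : ∀ x y, A (x + 2 * π, y) = A (x, y))
    (hAper₂ : ∀ x y, A (x, y + 2 * π) = A (x, y))
    (hAdiag : ∀ φ, A (φ, φ) = 1)
    (h : ℝ → ℂ)
    (hh : ∀ φ, h φ = -Complex.I * deriv (fun x => A (x, φ)) φ)
    (hreal : ∀ φ, (h φ).im = 0)
    (M : ℕ → ℕ → ℂ)
    (hM : ∀ s n, M s n = (1 / (2 * π * Complex.I ^ s)) *
      ∫ φ in (0:ℝ)..(2 * π), iteratedDeriv s (fun x => ρ (x, φ) * A (x, φ) ^ n) φ) :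
    ∀ s : ℕ, 1 ≤ s →
      (∃ C : ℝ, 0 ≤ C ∧ ∀ n : ℕ, 1 ≤ n →
        ‖M s n - (n : ℂ) ^ s * ((1 / (2 * π)) *
          ∫ φ in (0:ℝ)..(2 * π), ρ (φ, φ) * (h φ) ^ s)‖ ≤ C * (n : ℝ) ^ (s - 1)) ∧
      Tendsto (fun n : ℕ => M s n / (n : ℂ) ^ s) atTop
        (nhds ((1 / (2 * π)) * ∫ φ in (0:ℝ)..(2 * π), ρ (φ, φ) * (h φ) ^ s)) := by
  intro s hs
  have hρ' : ContDiff ℝ ∞ ρ := hρ.of_le (by simp)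
  have hA' : ContDiff ℝ ∞ A := hA.of_le (by simp)
  have hBg : ∀ φ : ℝ, ContDiff ℝ ∞ (fun x : ℝ => A (x, φ) - 1) :=
    fun φ => (aux_slice_contDiff A hA' φ).sub contDiff_const
  have hB0 : ∀ φ : ℝ, A (φ, φ) - 1 = 0 := fun φ => by rw [hAdiag]; ring
  set D : ℕ → ℝ → ℂ :=
    fun k φ => iteratedDeriv s (fun x => ρ (x, φ) * (A (x, φ) - 1) ^ k) φ with hD
  have hDcont : ∀ k, Continuous (D k) := by
    intro k
    exact aux_cont (fun p => ρ p * (A p - 1) ^ k)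
      (hρ'.mul ((hA'.sub contDiff_const).pow k)) s
  -- pointwise expansion of the integrand
  have key : ∀ n : ℕ, ∀ φ : ℝ, iteratedDeriv s (fun x => ρ (x, φ) * A (x, φ) ^ n) φ
      = ∑ k ∈ Finset.range (s + 1), (n.choose k : ℂ) * D k φ := by
    intro n φ
    have hsum : (fun x => ρ (x, φ) * A (x, φ) ^ n)
        = fun x => ∑ k ∈ Finset.range (n + 1),
            (n.choose k : ℂ) * (ρ (x, φ) * (A (x, φ) - 1) ^ k) := by
      funext x
      have ha : ∀ a r : ℂ, r * a ^ n
          = ∑ k ∈ Finset.range (n + 1), (n.choose k : ℂ) * (r * (a - 1) ^ k) := by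
        intro a r
        conv_lhs => rw [show a = (a - 1) + 1 by ring]
        rw [add_pow, Finset.mul_sum]
        exact Finset.sum_congr rfl fun k _ => by push_cast; ring
      exact ha _ _
    rw [hsum, aux_iteratedDeriv_sum _ _ s φ (fun k _ => contDiff_const.mul
      ((aux_slice_contDiff ρ hρ' φ).mul
        (((aux_slice_contDiff A hA' φ).sub contDiff_const).pow k)))]
    have hterm : ∀ k ∈ Finset.range (n + 1),
        iteratedDeriv s (fun x => (n.choose k : ℂ) * (ρ (x, φ) * (A (x, φ) - 1) ^ k)) φ
          = (n.choose k : ℂ) * D k φ := fun k _ =>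
      aux_iteratedDeriv_const_mul s φ _ _
        ((aux_slice_contDiff ρ hρ' φ).mul
          (((aux_slice_contDiff A hA' φ).sub contDiff_const).pow k))
    rw [Finset.sum_congr rfl hterm]
    -- convert the range
    have hzero : ∀ k, s < k → D k φ = 0 := fun k hk =>
      aux_vanish φ (fun x => A (x, φ) - 1) (hBg φ) (hB0 φ) k s hk
        (fun x => ρ (x, φ)) (aux_slice_contDiff ρ hρ' φ)
    have h1 : ∑ k ∈ Finset.range (n + 1), (n.choose k : ℂ) * D k φ
        = ∑ k ∈ Finset.range (max (n + 1) (s + 1)), (n.choose k : ℂ) * D k φ :=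
      Finset.sum_subset (Finset.range_subset_range.mpr (le_max_left _ _)) (by
        intro k _ hk
        have : n < k := by simp only [Finset.mem_range] at hk; omega
        simp [Nat.choose_eq_zero_of_lt this])
    have h2 : ∑ k ∈ Finset.range (s + 1), (n.choose k : ℂ) * D k φ
        = ∑ k ∈ Finset.range (max (n + 1) (s + 1)), (n.choose k : ℂ) * D k φ :=
      Finset.sum_subset (Finset.range_subset_range.mpr (le_max_right _ _)) (by
        intro k _ hk
        have hks : s < k := by simp only [Finset.mem_range] at hk; omega
        rw [hzero k hks, mul_zero])
    rw [h1, ← h2]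
  set J : ℂ := ∫ φ in (0:ℝ)..(2 * π), ρ (φ, φ) * (h φ) ^ s with hJ
  set Ik : ℕ → ℂ := fun k => ∫ φ in (0:ℝ)..(2 * π), D k φ with hIk
  have hMeq : ∀ n, M s n = (1 / (2 * π * Complex.I ^ s)) *
      ∑ k ∈ Finset.range (s + 1), (n.choose k : ℂ) * Ik k := by
    intro n
    rw [hM]
    congr 1
    rw [intervalIntegral.integral_congr
      (g := fun φ => ∑ k ∈ Finset.range (s + 1), (n.choose k : ℂ) * D k φ)
      (fun φ _ => key n φ)]
    rw [intervalIntegral.integral_finset_sum (f := fun k φ => (n.choose k : ℂ) * D k φ)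
      (fun k _ => ((continuous_const.mul (hDcont k)).intervalIntegrable _ _))]
    exact Finset.sum_congr rfl fun k _ => intervalIntegral.integral_const_mul _ _
  -- the leading coefficient
  have hDs : ∀ φ : ℝ, D s φ
      = ((s.factorial : ℂ) * Complex.I ^ s) * (ρ (φ, φ) * (h φ) ^ s) := by
    intro φ
    have hval := aux_leading φ (fun x => A (x, φ) - 1) (hBg φ) (hB0 φ) s
      (fun x => ρ (x, φ)) (aux_slice_contDiff ρ hρ' φ)
    have hder : deriv (fun x => A (x, φ) - 1) φ = Complex.I * h φ := by
      have h1 : deriv (fun x => A (x, φ) - 1) φ = deriv (fun x => A (x, φ)) φ :=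
        deriv_sub_const _
      rw [h1, hh φ, show Complex.I * (-Complex.I * deriv (fun x => A (x, φ)) φ)
        = (-(Complex.I * Complex.I)) * deriv (fun x => A (x, φ)) φ from by ring,
        Complex.I_mul_I]
      ring
    rw [hD]
    simp only
    rw [hval, hder, mul_pow]
    ring
  have hIs : Ik s = ((s.factorial : ℂ) * Complex.I ^ s) * J := by
    rw [hIk]
    simp only
    rw [intervalIntegral.integral_congr (g := fun φ =>
      ((s.factorial : ℂ) * Complex.I ^ s) * (ρ (φ, φ) * (h φ) ^ s)) (fun φ _ => hDs φ)]
    rw [intervalIntegral.integral_const_mul]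
  have hIne : (Complex.I : ℂ) ^ s ≠ 0 := pow_ne_zero _ Complex.I_ne_zero
  have hπC : ((π : ℝ) : ℂ) ≠ 0 := by exact_mod_cast Real.pi_ne_zero
  have hdiff : ∀ n : ℕ, M s n - (n : ℂ) ^ s * ((1 / (2 * π)) * J)
      = (1 / (2 * π * Complex.I ^ s)) *
          (∑ k ∈ Finset.range s, (n.choose k : ℂ) * Ik k)
        + (((n.choose s : ℂ) * (s.factorial : ℂ) - (n : ℂ) ^ s) / (2 * π)) * J := by
    intro n
    rw [hMeq n, Finset.sum_range_succ, hIs]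
    field_simp
    ring
  -- bounds
  obtain ⟨Cd, hCd0, hCd⟩ := aux_desc_bound s
  set S0 : ℝ := ∑ k ∈ Finset.range s, ‖Ik k‖ with hS0
  have hS0nn : 0 ≤ S0 := Finset.sum_nonneg fun k _ => norm_nonneg _
  have h2π : (1 : ℝ) ≤ ‖(2 * (π : ℝ) * Complex.I ^ s : ℂ)‖ := by
    have : ‖(2 * (π : ℝ) * Complex.I ^ s : ℂ)‖ = 2 * π := by
      rw [show (2 * ((π:ℝ):ℂ) * Complex.I ^ s) = (((2 * π : ℝ)):ℂ) * Complex.I ^ s by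
        push_cast; ring]
      rw [norm_mul, norm_pow, Complex.norm_I, one_pow, mul_one, Complex.norm_real,
        Real.norm_eq_abs, abs_of_nonneg (by positivity)]
    rw [this]
    nlinarith [Real.pi_gt_three]
  have h2π' : (1 : ℝ) ≤ ‖((2 * (π : ℝ) : ℝ) : ℂ)‖ := by
    have : ‖((2 * (π : ℝ) : ℝ) : ℂ)‖ = 2 * π := by
      rw [Complex.norm_real, Real.norm_eq_abs, abs_of_nonneg (by positivity)]
    rw [this]
    nlinarith [Real.pi_gt_three]
  have hbound : ∀ n : ℕ, 1 ≤ n →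
      ‖M s n - (n : ℂ) ^ s * ((1 / (2 * π)) * J)‖
        ≤ (S0 + Cd * ‖J‖) * (n : ℝ) ^ (s - 1) := by
    intro n hn
    have hn1 : (1 : ℝ) ≤ (n : ℝ) := by exact_mod_cast hn
    have hn0 : (0 : ℝ) < (n : ℝ) := by linarith
    rw [hdiff n]
    have hA1 : ‖(1 / (2 * (π : ℝ) * Complex.I ^ s : ℂ)) *
        (∑ k ∈ Finset.range s, (n.choose k : ℂ) * Ik k)‖
        ≤ S0 * (n : ℝ) ^ (s - 1) := by
      rw [norm_mul, norm_div]
      have hle1 : ‖(1 : ℂ)‖ / ‖(2 * (π : ℝ) * Complex.I ^ s : ℂ)‖ ≤ 1 := by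
        rw [norm_one]
        rw [div_le_one (by linarith)]
        exact h2π
      calc ‖(1:ℂ)‖ / ‖(2 * (π : ℝ) * Complex.I ^ s : ℂ)‖ *
            ‖∑ k ∈ Finset.range s, (n.choose k : ℂ) * Ik k‖
          ≤ 1 * ‖∑ k ∈ Finset.range s, (n.choose k : ℂ) * Ik k‖ := by
            apply mul_le_mul_of_nonneg_right hle1 (norm_nonneg _)
        _ = ‖∑ k ∈ Finset.range s, (n.choose k : ℂ) * Ik k‖ := one_mul _
        _ ≤ ∑ k ∈ Finset.range s, ‖(n.choose k : ℂ) * Ik k‖ := norm_sum_le _ _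
        _ ≤ ∑ k ∈ Finset.range s, (n : ℝ) ^ (s - 1) * ‖Ik k‖ := by
            apply Finset.sum_le_sum
            intro k hk
            rw [norm_mul]
            apply mul_le_mul_of_nonneg_right _ (norm_nonneg _)
            have h1 : ‖((n.choose k : ℕ) : ℂ)‖ = ((n.choose k : ℕ) : ℝ) := by
              simp
            rw [h1]
            have h2 : ((n.choose k : ℕ) : ℝ) ≤ (n : ℝ) ^ k := by
              exact_mod_cast Nat.choose_le_pow n k
            refine h2.trans ?_
            apply pow_le_pow_right₀ hn1
            simp only [Finset.mem_range] at hk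
            omega
        _ = S0 * (n : ℝ) ^ (s - 1) := by
            rw [hS0, Finset.sum_mul]
            exact Finset.sum_congr rfl fun k _ => mul_comm _ _
    have hA2 : ‖(((n.choose s : ℂ) * (s.factorial : ℂ) - (n : ℂ) ^ s) / (2 * π)) * J‖
        ≤ (Cd * (n : ℝ) ^ (s - 1)) * ‖J‖ := by
      rw [norm_mul, norm_div]
      have hnum : ((n.choose s : ℂ) * (s.factorial : ℂ) - (n : ℂ) ^ s)
          = (((n.descFactorial s : ℝ) - (n : ℝ) ^ s : ℝ) : ℂ) := by
        push_cast [Nat.descFactorial_eq_factorial_mul_choose]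
        ring
      have hnn : ‖((n.choose s : ℂ) * (s.factorial : ℂ) - (n : ℂ) ^ s)‖
          = |((n.descFactorial s : ℝ)) - (n : ℝ) ^ s| := by
        rw [hnum, Complex.norm_real, Real.norm_eq_abs]
      have hdsc : |((n.descFactorial s : ℝ)) - (n : ℝ) ^ s| ≤ Cd * (n : ℝ) ^ (s - 1) := by
        have hmain := hCd n hn
        have hpow : (n : ℝ) ^ s = (n : ℝ) ^ (s - 1) * n := by
          rw [← pow_succ]
          congr 1
          omega
        refine le_of_mul_le_mul_right ?_ hn0
        rw [mul_assoc, ← hpow]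
        exact hmain
      have hden : (1 : ℝ) ≤ ‖(2 * (π : ℝ) : ℂ)‖ := by
        have : ((2 * (π : ℝ) : ℝ) : ℂ) = (2 * (π : ℝ) : ℂ) := by push_cast; ring
        rw [← this]
        exact h2π'
      calc ‖((n.choose s : ℂ) * (s.factorial : ℂ) - (n : ℂ) ^ s)‖ / ‖(2 * (π : ℝ) : ℂ)‖ * ‖J‖
          ≤ ‖((n.choose s : ℂ) * (s.factorial : ℂ) - (n : ℂ) ^ s)‖ / 1 * ‖J‖ := by
            gcongr
        _ = ‖((n.choose s : ℂ) * (s.factorial : ℂ) - (n : ℂ) ^ s)‖ * ‖J‖ := by rw [div_one]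
        _ ≤ (Cd * (n : ℝ) ^ (s - 1)) * ‖J‖ := by
            rw [hnn]
            apply mul_le_mul_of_nonneg_right hdsc (norm_nonneg _)
    refine (norm_add_le _ _).trans ?_
    rw [show (S0 + Cd * ‖J‖) * (n : ℝ) ^ (s - 1)
      = S0 * (n : ℝ) ^ (s - 1) + (Cd * (n : ℝ) ^ (s - 1)) * ‖J‖ by ring]
    exact add_le_add hA1 hA2
  constructor
  · exact ⟨S0 + Cd * ‖J‖, add_nonneg hS0nn (mul_nonneg hCd0 (norm_nonneg _)), hbound⟩
  · rw [← tendsto_sub_nhds_zero_iff]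
    have hgt : Tendsto (fun n : ℕ => (S0 + Cd * ‖J‖) * (n : ℝ)⁻¹) atTop (nhds 0) := by
      have h0 : Tendsto (fun n : ℕ => (n : ℝ)⁻¹) atTop (nhds 0) :=
        tendsto_inv_atTop_nhds_zero_nat
      have h1 := h0.const_mul (S0 + Cd * ‖J‖)
      simpa using h1
    refine squeeze_zero_norm' ?_ hgt
    · filter_upwards [Filter.eventually_ge_atTop 1] with n hn
      have hn1 : (1 : ℝ) ≤ (n : ℝ) := by exact_mod_cast hn
      have hn0 : (0 : ℝ) < (n : ℝ) := by linarith
      have hnC : ((n : ℂ)) ^ s ≠ 0 := by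
        apply pow_ne_zero
        exact_mod_cast hn0.ne'
      have hEq : M s n / (n : ℂ) ^ s - (1 / (2 * π)) * J
          = (M s n - (n : ℂ) ^ s * ((1 / (2 * π)) * J)) / (n : ℂ) ^ s := by
        field_simp
      rw [hEq, norm_div]
      have hnorm : ‖((n : ℂ)) ^ s‖ = (n : ℝ) ^ s := by
        rw [norm_pow, Complex.norm_natCast]
      rw [hnorm]
      have hb := hbound n hn
      have hpow : (n : ℝ) ^ s = (n : ℝ) ^ (s - 1) * n := by
        rw [← pow_succ]; congr 1; omega
      rw [div_le_iff₀ (by positivity)]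
      calc ‖M s n - (n : ℂ) ^ s * ((1 / (2 * π)) * J)‖
          ≤ (S0 + Cd * ‖J‖) * (n : ℝ) ^ (s - 1) := hb
        _ = (S0 + Cd * ‖J‖) * (n : ℝ)⁻¹ * (n : ℝ) ^ s := by
            rw [hpow]
            field_simp
end

section
/- Let U be a 2×2 complex unitary matrix, let σ₃ = !![1, 0; 0, −1], and define V(φ) = exp(iφσ₃)·U for φ ∈ ℝ. Then for every integer k ≥ 1 and every φ ∈ ℝ, −i · (V(φ)†)^k · (d/dφ)[V(φ)^k] = Σ_{j=0}^{k−1} (V(φ)†)^j (U†σ₃U) V(φ)^j, where (d/dφ)[V(φ)^k] denotes the entrywise derivative of the matrix-valued function φ ↦ V(φ)^k. -/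
open Matrix

/-- The third Pauli matrix. -/
noncomputable def pauli3 : Matrix (Fin 2) (Fin 2) ℂ := !![1, 0; 0, -1]

/-- The coin evolution matrix `V(φ) = exp(iφσ₃)·U` of the ε_{V^k} walk. -/
noncomputable def coinV (U : Matrix (Fin 2) (Fin 2) ℂ) (φ : ℝ) :
    Matrix (Fin 2) (Fin 2) ℂ :=
  NormedSpace.exp ((Complex.I * (φ : ℂ)) • pauli3) * U

lemma pauli3_diag : pauli3 = Matrix.diagonal ![1, -1] := by
  ext i j
  fin_cases i <;> fin_cases j <;> simp [pauli3, Matrix.diagonal]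

lemma coinV_eq (U : Matrix (Fin 2) (Fin 2) ℂ) (φ : ℝ) :
    coinV U φ =
      Matrix.diagonal ![Complex.exp (Complex.I * φ), Complex.exp (-(Complex.I * φ))] * U := by
  have h1 : (Complex.I * (φ : ℂ)) • pauli3 =
      Matrix.diagonal ![Complex.I * φ, -(Complex.I * φ)] := by
    rw [pauli3_diag]
    ext i j
    fin_cases i <;> fin_cases j <;> simp [Matrix.diagonal]
  rw [coinV, h1, Matrix.exp_diagonal]
  congr 1
  ext i j
  fin_cases i <;> fin_cases j <;>
    simp [Matrix.diagonal, ← Complex.exp_eq_exp_ℂ]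

lemma hasDerivAt_coinV (U : Matrix (Fin 2) (Fin 2) ℂ) (φ : ℝ) (i j : Fin 2) :
    HasDerivAt (fun x : ℝ => coinV U x i j)
      ((Complex.I • (pauli3 * coinV U φ)) i j) φ := by
  have hI : ∀ z : ℂ, HasDerivAt (fun w : ℂ => Complex.exp (Complex.I * w))
      (Complex.I * Complex.exp (Complex.I * z)) z := by
    intro z
    have h := (Complex.hasDerivAt_exp (Complex.I * z)).comp z
      ((hasDerivAt_id z).const_mul Complex.I)
    have he : (fun w : ℂ => Complex.exp (Complex.I * w)) =
        Complex.exp ∘ (fun w => Complex.I * w) := rfl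
    rw [he]
    exact h.congr_deriv (by ring)
  have hmI : ∀ z : ℂ, HasDerivAt (fun w : ℂ => Complex.exp (-(Complex.I * w)))
      (-Complex.I * Complex.exp (-(Complex.I * z))) z := by
    intro z
    have h := (Complex.hasDerivAt_exp (-(Complex.I * z))).comp z
      (((hasDerivAt_id z).const_mul Complex.I).neg)
    have he : (fun w : ℂ => Complex.exp (-(Complex.I * w))) =
        Complex.exp ∘ (fun w => -(Complex.I * w)) := rfl
    rw [he]
    exact h.congr_deriv (by ring)
  have key : ∀ x : ℝ, coinV U x i j =
      (![Complex.exp (Complex.I * x), Complex.exp (-(Complex.I * x))] i) * U i j := by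
    intro x
    rw [coinV_eq, Matrix.diagonal_mul]
  have key2 : (Complex.I • (pauli3 * coinV U φ)) i j =
      (![Complex.I * Complex.exp (Complex.I * φ),
         -Complex.I * Complex.exp (-(Complex.I * φ))] i) * U i j := by
    rw [coinV_eq, pauli3_diag, ← Matrix.mul_assoc, Matrix.diagonal_mul_diagonal]
    fin_cases i <;>
      simp [Matrix.diagonal_mul, Matrix.smul_apply, Matrix.mul_apply, Fin.sum_univ_two,
        Matrix.diagonal, Matrix.of_apply] <;> ring
  simp only [key, key2]
  fin_cases i
  · exact ((hI φ).comp_ofReal).mul_const _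
  · exact ((hmI φ).comp_ofReal).mul_const _

noncomputable def Dmat (U : Matrix (Fin 2) (Fin 2) ℂ) (φ : ℝ) :
    ℕ → Matrix (Fin 2) (Fin 2) ℂ
  | 0 => 0
  | k + 1 => Dmat U φ k * coinV U φ +
      (coinV U φ) ^ k * (Complex.I • (pauli3 * coinV U φ))

lemma hasDerivAt_coinV_pow (U : Matrix (Fin 2) (Fin 2) ℂ) (φ : ℝ) (k : ℕ) :
    ∀ i j : Fin 2, HasDerivAt (fun x : ℝ => ((coinV U x) ^ k) i j)
      (Dmat U φ k i j) φ := by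
  induction k with
  | zero =>
    intro i j
    simp only [pow_zero, Dmat]
    exact hasDerivAt_const φ _
  | succ k ih =>
    intro i j
    have hfn : ∀ x : ℝ, ((coinV U x) ^ (k + 1)) i j =
        ∑ l : Fin 2, ((coinV U x) ^ k) i l * coinV U x l j := by
      intro x; rw [pow_succ, Matrix.mul_apply]
    simp only [hfn]
    have hsum : HasDerivAt
        (fun x : ℝ => ∑ l : Fin 2, ((coinV U x) ^ k) i l * coinV U x l j)
        (∑ l : Fin 2, (Dmat U φ k i l * coinV U φ l j +
          ((coinV U φ) ^ k) i l * (Complex.I • (pauli3 * coinV U φ)) l j)) φ :=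
      HasDerivAt.fun_sum fun l _ => (ih i l).mul (hasDerivAt_coinV U φ l j)
    convert hsum using 1
    rw [show Dmat U φ (k + 1) = Dmat U φ k * coinV U φ +
      (coinV U φ) ^ k * (Complex.I • (pauli3 * coinV U φ)) from rfl]
    rw [Matrix.add_apply, Matrix.mul_apply, Matrix.mul_apply, ← Finset.sum_add_distrib]

lemma deriv_coinV_pow (U : Matrix (Fin 2) (Fin 2) ℂ) (φ : ℝ) (k : ℕ) :
    (Matrix.of fun i j => deriv (fun x : ℝ => ((coinV U x) ^ k) i j) φ) =
      Dmat U φ k := by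
  ext i j
  exact (hasDerivAt_coinV_pow U φ k i j).deriv

lemma E_conjT_mul (φ : ℝ) :
    (Matrix.diagonal ![Complex.exp (Complex.I * φ), Complex.exp (-(Complex.I * φ))])ᴴ *
      Matrix.diagonal ![Complex.exp (Complex.I * φ), Complex.exp (-(Complex.I * φ))] = 1 := by
  ext i j
  fin_cases i <;> fin_cases j <;>
    simp [Matrix.mul_apply, Fin.sum_univ_two, Matrix.diagonal, Matrix.conjTranspose_apply,
      ← Complex.exp_conj, ← Complex.exp_add, Matrix.one_apply]

lemma coinV_unitary (U : Matrix (Fin 2) (Fin 2) ℂ) (hU : Uᴴ * U = 1) (φ : ℝ) :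
    (coinV U φ)ᴴ * coinV U φ = 1 := by
  rw [coinV_eq, Matrix.conjTranspose_mul, Matrix.mul_assoc, ← Matrix.mul_assoc _ _ U,
    E_conjT_mul, Matrix.one_mul, hU]

lemma coinV_pow_unitary (U : Matrix (Fin 2) (Fin 2) ℂ) (hU : Uᴴ * U = 1) (φ : ℝ) :
    ∀ k : ℕ, ((coinV U φ)ᴴ) ^ k * (coinV U φ) ^ k = 1 := by
  intro k
  induction k with
  | zero => simp
  | succ k ih =>
    rw [pow_succ, pow_succ', Matrix.mul_assoc, ← Matrix.mul_assoc (coinV U φ)ᴴ,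
      coinV_unitary U hU, Matrix.one_mul, ih]

lemma coinV_conj_pauli (U : Matrix (Fin 2) (Fin 2) ℂ) (φ : ℝ) :
    (coinV U φ)ᴴ * pauli3 * coinV U φ = Uᴴ * pauli3 * U := by
  have hE : (Matrix.diagonal ![Complex.exp (Complex.I * φ),
        Complex.exp (-(Complex.I * φ))])ᴴ * pauli3 *
      Matrix.diagonal ![Complex.exp (Complex.I * φ), Complex.exp (-(Complex.I * φ))] =
      pauli3 := by
    ext i j
    fin_cases i <;> fin_cases j <;>
      simp [Matrix.mul_apply, Fin.sum_univ_two, Matrix.diagonal, pauli3,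
        Matrix.conjTranspose_apply, ← Complex.exp_conj, ← Complex.exp_add]
  rw [coinV_eq, Matrix.conjTranspose_mul]
  simp only [Matrix.mul_assoc]
  congr 1
  rw [← Matrix.mul_assoc, ← Matrix.mul_assoc, hE]

lemma main_aux (U : Matrix (Fin 2) (Fin 2) ℂ) (hU : Uᴴ * U = 1) (φ : ℝ) :
    ∀ k : ℕ, (-Complex.I) • (((coinV U φ)ᴴ) ^ k * Dmat U φ k) =
      ∑ j ∈ Finset.range k, ((coinV U φ)ᴴ) ^ j * (Uᴴ * pauli3 * U) * (coinV U φ) ^ j := by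
  intro k
  set V := coinV U φ with hV
  induction k with
  | zero => simp [Dmat]
  | succ k ih =>
    have hD : Dmat U φ (k + 1) = Dmat U φ k * V +
        V ^ k * (Complex.I • (pauli3 * V)) := rfl
    have hterm : (Vᴴ) ^ (k + 1) * (V ^ k * (Complex.I • (pauli3 * V))) =
        Complex.I • (Uᴴ * pauli3 * U) := by
      rw [pow_succ', Matrix.mul_assoc, ← Matrix.mul_assoc ((Vᴴ) ^ k),
        coinV_pow_unitary U hU φ k, Matrix.one_mul, Matrix.mul_smul,
        ← Matrix.mul_assoc, coinV_conj_pauli U φ]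
    have hshift : (Vᴴ) ^ (k + 1) * (Dmat U φ k * V) =
        Vᴴ * ((Vᴴ) ^ k * Dmat U φ k) * V := by
      rw [pow_succ']
      simp only [Matrix.mul_assoc]
    rw [hD, Matrix.mul_add, smul_add, hterm, smul_smul, hshift]
    have : (-Complex.I) • (Vᴴ * ((Vᴴ) ^ k * Dmat U φ k) * V) =
        Vᴴ * ((-Complex.I) • ((Vᴴ) ^ k * Dmat U φ k)) * V := by
      simp only [smul_mul_assoc, mul_smul_comm]
    rw [this, ih, Finset.sum_range_succ']
    congr 1
    · rw [Finset.mul_sum, Finset.sum_mul]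
      refine Finset.sum_congr rfl fun j _ => ?_
      rw [pow_succ', pow_succ]
      simp only [Matrix.mul_assoc]
    · simp [Complex.I_mul_I]

/-- The identity `-i·(V(φ)†)^k · (d/dφ)[V(φ)^k] = Σ_{j<k} (V(φ)†)^j (U†σ₃U) V(φ)^j`
underlying the formula for the asymptotic characteristic function. -/
theorem deriv_of_coin_power
    (U : Matrix (Fin 2) (Fin 2) ℂ) (hU : Uᴴ * U = 1) (hU' : U * Uᴴ = 1) :
    ∀ k : ℕ, 1 ≤ k → ∀ φ : ℝ,
      (-Complex.I) • (((coinV U φ)ᴴ) ^ k *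
          Matrix.of (fun i j => deriv (fun x : ℝ => ((coinV U x) ^ k) i j) φ)) =
        ∑ j ∈ Finset.range k, ((coinV U φ)ᴴ) ^ j * (Uᴴ * pauli3 * U) * (coinV U φ) ^ j := by
  intro k _ φ
  rw [deriv_coinV_pow U φ k]
  exact main_aux U hU φ k
end

section
/- Let λ, t, χ ∈ ℝ and r ∈ ℕ. Define the 2×2 complex matrices A₁ = !![cos(λt√(r+1)), 0; 0, cos(λt√r)], A₂ = !![0, 0; sin(λt√(r+1)), 0], A₃ = !![0, sin(λt√r); 0, 0], and let ρ_C = |c⟩⟨c| where |c⟩ = (cos χ, i sin χ)ᵀ. Then A₁ρ_C A₁† + A₂ρ_C A₂† + A₃ρ_C A₃† = (1/2)·1 + (1/2)·sin(2χ)·cos(λt√(r+1))·cos(λt√r)·σ₂ + (1/2)·[cos(2λt√(r+1))·cos²χ − cos(2λt√r)·sin²χ]·σ₃, where 1 is the 2×2 identity, σ₂ = !![0, −i; i, 0], and σ₃ = !![1, 0; 0, −1]. -/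
open Matrix Real

/-- The second Pauli matrix. -/
noncomputable def pauli2 : Matrix (Fin 2) (Fin 2) ℂ := !![0, -Complex.I; Complex.I, 0]

/-- Eq. (14): the Jaynes–Cummings Kraus map applied to the initial coin state
`|c⟩⟨c|` with `|c⟩ = cos χ|+⟩ + i sin χ|−⟩` yields the stated Bloch form. -/
theorem JCM_coin_preparation
    (lam t χ : ℝ) (r : ℕ)
    (A₁ A₂ A₃ ρC : Matrix (Fin 2) (Fin 2) ℂ)
    (hA₁ : A₁ = !![(cos (lam * t * Real.sqrt ((r : ℝ) + 1)) : ℂ), 0;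
                   0, (cos (lam * t * Real.sqrt (r : ℝ)) : ℂ)])
    (hA₂ : A₂ = !![0, 0; (sin (lam * t * Real.sqrt ((r : ℝ) + 1)) : ℂ), 0])
    (hA₃ : A₃ = !![0, (sin (lam * t * Real.sqrt (r : ℝ)) : ℂ); 0, 0])
    (c : Fin 2 → ℂ) (hc : c = ![(cos χ : ℂ), Complex.I * (sin χ : ℂ)])
    (hρC : ρC = Matrix.vecMulVec c (star c)) :
    A₁ * ρC * A₁ᴴ + A₂ * ρC * A₂ᴴ + A₃ * ρC * A₃ᴴ =
      ((1 / 2 : ℂ)) • (1 : Matrix (Fin 2) (Fin 2) ℂ) +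
      (((1 / 2) * sin (2 * χ) * cos (lam * t * Real.sqrt ((r : ℝ) + 1)) *
          cos (lam * t * Real.sqrt (r : ℝ)) : ℝ) : ℂ) • pauli2 +
      (((1 / 2) * (cos (2 * lam * t * Real.sqrt ((r : ℝ) + 1)) * cos χ ^ 2 -
          cos (2 * lam * t * Real.sqrt (r : ℝ)) * sin χ ^ 2) : ℝ) : ℂ) • pauli3 := by
  subst hA₁ hA₂ hA₃ hc hρC
  have e1 : Complex.cos (2 * (lam:ℂ) * t * Real.sqrt ((r:ℝ)+1)) =
      2 * Complex.cos ((lam:ℂ) * t * Real.sqrt ((r:ℝ)+1)) ^ 2 - 1 := by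
    rw [show (2 * (lam:ℂ) * t * Real.sqrt ((r:ℝ)+1)) =
        2 * ((lam:ℂ) * t * Real.sqrt ((r:ℝ)+1)) by ring, Complex.cos_two_mul]
  have e2 : Complex.cos (2 * (lam:ℂ) * t * Real.sqrt (r:ℝ)) =
      2 * Complex.cos ((lam:ℂ) * t * Real.sqrt (r:ℝ)) ^ 2 - 1 := by
    rw [show (2 * (lam:ℂ) * t * Real.sqrt (r:ℝ)) =
        2 * ((lam:ℂ) * t * Real.sqrt (r:ℝ)) by ring, Complex.cos_two_mul]
  have es : Complex.sin (2 * (χ:ℂ)) = 2 * Complex.sin χ * Complex.cos χ :=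
    Complex.sin_two_mul χ
  have hI : Complex.I ^ 2 = -1 := Complex.I_sq
  have p1 := Complex.sin_sq_add_cos_sq ((lam:ℂ) * t * Real.sqrt ((r:ℝ)+1))
  have p2 := Complex.sin_sq_add_cos_sq ((lam:ℂ) * t * Real.sqrt (r:ℝ))
  have pχ := Complex.sin_sq_add_cos_sq (χ:ℂ)
  have cconj : ∀ x : ℝ, (starRingEnd ℂ) (Complex.cos x) = Complex.cos x := fun x => by
    rw [← Complex.ofReal_cos, Complex.conj_ofReal]
  have sconj : ∀ x : ℝ, (starRingEnd ℂ) (Complex.sin x) = Complex.sin x := fun x => by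
    rw [← Complex.ofReal_sin, Complex.conj_ofReal]
  ext i j
  fin_cases i <;> fin_cases j <;>
    simp [Matrix.mul_apply, Fin.sum_univ_two, vecMulVec_apply, Matrix.one_apply,
      pauli2, pauli3, Matrix.conjTranspose_apply, Matrix.vecMul, dotProduct,
      cconj, sconj, ← Complex.cos_conj, ← Complex.sin_conj, _root_.map_mul, Complex.conj_ofReal, Complex.I_sq, -Matrix.cons_vecMulVec]
  · rw [e1, e2]
    linear_combination Complex.sin (χ:ℂ) ^ 2 * p2 + (1/2 : ℂ) * pχ -
      Complex.sin ((lam:ℂ) * t * Real.sqrt (r:ℝ)) ^ 2 * Complex.sin (χ:ℂ) ^ 2 * hI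
  · rw [es]; ring
  · rw [es]; ring
  · rw [e1, e2]
    linear_combination Complex.cos (χ:ℂ) ^ 2 * p1 + (1/2 : ℂ) * pχ -
      Complex.cos ((lam:ℂ) * t * Real.sqrt (r:ℝ)) ^ 2 * Complex.sin (χ:ℂ) ^ 2 * hI
end

section
/- Let λ > 0, r ∈ ℕ, k ∈ ℤ, and define the Jaynes–Cummings Kraus map ε_U(ρ) = A₁ρA₁† + A₂ρA₂† + A₃ρA₃† with A₁ = !![cos(λt√(r+1)), 0; 0, cos(λt√r)], A₂ = !![0, 0; sin(λt√(r+1)), 0], A₃ = !![0, sin(λt√r); 0, 0]. Then: (i) if t = (2k+1)π/(4λ√(r+1)), then ε_U(!![1, 0; 0, 0]) = (1/2)·1; and (ii) if r ≥ 1 and t = (2k+1)π/(4λ√r), then ε_U(!![0, 0; 0, 1]) = (1/2)·1. In both resonance cases the prepared coin is the maximally mixed state. -/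
open Matrix Real

/-- The Jaynes–Cummings cavity coin-preparation map `ε_U` (photon number `r`,
coupling `lam`, crossing time `t`), given by its three Kraus generators. -/
noncomputable def JCMmap (lam t : ℝ) (r : ℕ) (ρ : Matrix (Fin 2) (Fin 2) ℂ) :
    Matrix (Fin 2) (Fin 2) ℂ :=
  let A₁ : Matrix (Fin 2) (Fin 2) ℂ :=
    !![(cos (lam * t * Real.sqrt ((r : ℝ) + 1)) : ℂ), 0;
       0, (cos (lam * t * Real.sqrt (r : ℝ)) : ℂ)]
  let A₂ : Matrix (Fin 2) (Fin 2) ℂ :=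
    !![0, 0; (sin (lam * t * Real.sqrt ((r : ℝ) + 1)) : ℂ), 0]
  let A₃ : Matrix (Fin 2) (Fin 2) ℂ :=
    !![0, (sin (lam * t * Real.sqrt (r : ℝ)) : ℂ); 0, 0]
  A₁ * ρ * A₁ᴴ + A₂ * ρ * A₂ᴴ + A₃ * ρ * A₃ᴴ

lemma cos_sq_half (k : ℤ) : Real.cos ((2 * (k : ℝ) + 1) * π / 4) ^ 2 = 1 / 2 := by
  have h : Real.cos (2 * ((2 * (k : ℝ) + 1) * π / 4)) = 0 := by
    have h2 : 2 * ((2 * (k : ℝ) + 1) * π / 4) = (k : ℝ) * π + π / 2 := by ring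
    rw [h2, Real.cos_add_pi_div_two, Real.sin_int_mul_pi, neg_zero]
  have h3 := Real.cos_sq ((2 * (k : ℝ) + 1) * π / 4)
  rw [h] at h3; rw [h3]; ring

lemma sin_sq_half (k : ℤ) : Real.sin ((2 * (k : ℝ) + 1) * π / 4) ^ 2 = 1 / 2 := by
  have h1 := Real.sin_sq_add_cos_sq ((2 * (k : ℝ) + 1) * π / 4)
  have h2 := cos_sq_half k
  linarith

/-- Resonance conditions: at crossing times `t = (2k+1)π/(4λ√(r+1))` (resp.
`t = (2k+1)π/(4λ√r)` for `r ≥ 1`), the cavity prepares the coin `|+⟩⟨+|`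
(resp. `|−⟩⟨−|`) into the maximally mixed state. -/
theorem JCM_resonance_maximally_mixed
    (lam : ℝ) (hlam : 0 < lam) (r : ℕ) (k : ℤ) :
    (JCMmap lam ((2 * (k : ℝ) + 1) * π / (4 * lam * Real.sqrt ((r : ℝ) + 1))) r
        !![1, 0; 0, 0] = (1 / 2 : ℂ) • (1 : Matrix (Fin 2) (Fin 2) ℂ)) ∧
    (1 ≤ r →
      JCMmap lam ((2 * (k : ℝ) + 1) * π / (4 * lam * Real.sqrt (r : ℝ))) r
        !![0, 0; 0, 1] = (1 / 2 : ℂ) • (1 : Matrix (Fin 2) (Fin 2) ℂ)) := by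
  constructor
  · have hs : Real.sqrt ((r : ℝ) + 1) > 0 := Real.sqrt_pos.mpr (by positivity)
    have harg : lam * ((2 * (k : ℝ) + 1) * π / (4 * lam * Real.sqrt ((r : ℝ) + 1))) *
        Real.sqrt ((r : ℝ) + 1) = (2 * (k : ℝ) + 1) * π / 4 := by
      field_simp
    rw [JCMmap, harg]
    ext i j
    fin_cases i <;> fin_cases j <;>
      simp [-Complex.ofReal_cos, -Complex.ofReal_sin, Matrix.mul_apply,
        Fin.sum_univ_succ, Matrix.one_apply, Matrix.conjTranspose_apply,
        Complex.conj_ofReal, Matrix.vecMul, dotProduct] <;>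
      · rw [← Complex.ofReal_mul, ← sq]
        norm_num [cos_sq_half k, sin_sq_half k]
  · intro hr
    have hs : Real.sqrt (r : ℝ) > 0 := Real.sqrt_pos.mpr (by positivity)
    have harg : lam * ((2 * (k : ℝ) + 1) * π / (4 * lam * Real.sqrt (r : ℝ))) *
        Real.sqrt (r : ℝ) = (2 * (k : ℝ) + 1) * π / 4 := by
      field_simp
    rw [JCMmap, harg]
    ext i j
    fin_cases i <;> fin_cases j <;>
      simp [-Complex.ofReal_cos, -Complex.ofReal_sin, Matrix.mul_apply,
        Fin.sum_univ_succ, Matrix.one_apply, Matrix.conjTranspose_apply,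
        Complex.conj_ofReal, Matrix.vecMul, dotProduct] <;>
      · rw [← Complex.ofReal_mul, ← sq]
        norm_num [cos_sq_half k, sin_sq_half k]
end
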